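/- For a, b ∈ ℝ with a ≠ 0 and b/a ∉ (b₁, 3 − 2√3), the polynomial P_{a,b}(x,y) = ax³ + bx²y + bxy² + ay³ satisfies sup_{(x,y)∈[−1,1]²} |P_{a,b}(x,y)| = |2a + 2b|, where b₁ = (3/7)(3 − 2·9^{1/3}/(−12+7√3)^{1/3} + 2(−36+21√3)^{1/3}). -/

import Mathlib

/-- Supremum of `|a x³ + b x² y + b x y² + a y³|` over the unit square `[-1,1]²`. -/
noncomputable def supCubic (a b : ℝ) : ℝ :=
  sSup {r : ℝ | ∃ x y : ℝ, |x| ≤ 1 ∧ |y| ≤ 1 ∧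
    r = |a * x^3 + b * x^2 * y + b * x * y^2 + a * y^3|}

noncomputable def b₁ : ℝ :=
  (3/7) * (3 - 2 * (9:ℝ) ^ ((1:ℝ)/3) / (-12 + 7 * Real.sqrt 3) ^ ((1:ℝ)/3)
      + 2 * (-36 + 21 * Real.sqrt 3) ^ ((1:ℝ)/3))

lemma Dfacts : ∃ D : ℝ, D^3 = 72 - 9*D ∧ 3 ≤ D ∧ D ≤ 4 ∧ b₁ = (9 - 6*D)/7 := by
  have h3 : Real.sqrt 3 ^ 2 = 3 := Real.sq_sqrt (by norm_num)
  have h3nn := Real.sqrt_nonneg 3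
  have hlb : (1.7:ℝ) < Real.sqrt 3 := by nlinarith
  have hub : Real.sqrt 3 < 1.8 := by nlinarith
  set A : ℝ := ((36:ℝ) + 21 * Real.sqrt 3) ^ ((1:ℝ)/3) with hAdef
  set B : ℝ := ((-36:ℝ) + 21 * Real.sqrt 3) ^ ((1:ℝ)/3) with hBdef
  have hApos : (0:ℝ) < 36 + 21 * Real.sqrt 3 := by nlinarith
  have hBpos : (0:ℝ) < -36 + 21 * Real.sqrt 3 := by nlinarith
  have cube : ∀ x : ℝ, 0 < x → (x ^ ((1:ℝ)/3)) ^ 3 = x := by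
    intro x hx
    rw [← Real.rpow_natCast (x ^ ((1:ℝ)/3)) 3, ← Real.rpow_mul hx.le]
    norm_num
  have hA3 : A ^ 3 = 36 + 21 * Real.sqrt 3 := cube _ hApos
  have hB3 : B ^ 3 = -36 + 21 * Real.sqrt 3 := cube _ hBpos
  have hAp : 0 < A := Real.rpow_pos_of_pos hApos _
  have hBp : 0 < B := Real.rpow_pos_of_pos hBpos _
  have hABcube : (A * B) ^ 3 = 27 := by rw [mul_pow, hA3, hB3]; nlinarith
  have hAB : A * B = 3 := by
    have h0 : (A*B - 3) * ((A*B)^2 + 3*(A*B) + 9) = 0 := by linear_combination hABcube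
    have h1 : (A*B)^2 + 3*(A*B) + 9 > 0 := by positivity
    have := mul_eq_zero.1 h0
    rcases this with h | h
    · linarith
    · linarith
  refine ⟨A - B, ?_, ?_, ?_, ?_⟩
  · linear_combination hA3 - hB3 - 3*(A-B)*hAB
  · have hD3 : (A-B)^3 = 72 - 9*(A-B) := by linear_combination hA3 - hB3 - 3*(A-B)*hAB
    nlinarith [sq_nonneg (2*(A-B)+3), sq_nonneg (A-B)]
  · have hD3 : (A-B)^3 = 72 - 9*(A-B) := by linear_combination hA3 - hB3 - 3*(A-B)*hAB
    nlinarith [sq_nonneg ((A-B)+2), sq_nonneg (A-B)]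
  · have h9 : (9:ℝ) / (-12 + 7*Real.sqrt 3) = 36 + 21*Real.sqrt 3 := by
      have hne : (-12:ℝ) + 7*Real.sqrt 3 > 0 := by nlinarith
      rw [div_eq_iff (ne_of_gt hne)]
      nlinarith
    have hdiv : (9:ℝ) ^ ((1:ℝ)/3) / ((-12:ℝ) + 7*Real.sqrt 3) ^ ((1:ℝ)/3) = A := by
      rw [hAdef, ← h9, Real.div_rpow (by norm_num) (by nlinarith)]
    rw [b₁, mul_div_assoc, hdiv]
    ring

lemma keyIneq (D s : ℝ) (hD : D^3 = 72 - 9*D) (hD1 : 3 ≤ D) (hD2 : D ≤ 4)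
    (hs0 : 0 ≤ s) (hs2 : s ≤ 2) : 7*(s^3+8) ≤ (12+6*D)*(s^2-s+2) := by
  have hds : (0:ℝ) < 2*D^2+D-6 := by nlinarith
  have hL : (0:ℝ) ≤ (12+6*D)*(2*D^2+D-6) - 14*(D^2-17*D+60) - 7*(2*D^2+D-6)*s := by
    nlinarith [mul_nonneg (by linarith : (0:ℝ) ≤ 2-s) hds.le, sq_nonneg (D-3), sq_nonneg (D-4)]
  have hid : (2*D^2+D-6)^3 * ((12+6*D)*(s^2-s+2) - 7*(s^3+8)) =
      ((12+6*D)*(2*D^2+D-6) - 14*(D^2-17*D+60) - 7*(2*D^2+D-6)*s) *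
        ((2*D^2+D-6)*s - (D^2-17*D+60))^2 := by
    linear_combination ((-45696) + (-7056)*s + 30912*D + 3822*s*D + (-6510)*D^2 + 1911*s*D^2
      + 280*D^3 + (-882)*s*D^3 + 84*D^4) * hD
  nlinarith [hid, mul_nonneg hL (sq_nonneg ((2*D^2+D-6)*s - (D^2-17*D+60))),
    pow_pos hds 3]

lemma core (t x y : ℝ) (ht : t ≤ b₁ ∨ 3 - 2*Real.sqrt 3 ≤ t)
    (hx : |x| ≤ 1) (hy : |y| ≤ 1) (hs : 0 ≤ x + y) :
    |x^3 + t*x^2*y + t*x*y^2 + y^3| ≤ |2 + 2*t| := by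
  obtain ⟨hx1, hx2⟩ := abs_le.1 hx
  obtain ⟨hy1, hy2⟩ := abs_le.1 hy
  have hP : x^3 + t*x^2*y + t*x*y^2 + y^3 = (x+y)^3 + (t-3)*(x+y)*(x*y) := by ring
  rw [hP]
  have hs2 : x + y ≤ 2 := by linarith
  have hp1 : (x+y) - 1 ≤ x*y := by nlinarith [mul_nonneg (by linarith : (0:ℝ) ≤ 1-x) (by linarith : (0:ℝ) ≤ 1-y)]
  have hp2 : 4*(x*y) ≤ (x+y)^2 := by nlinarith [sq_nonneg (x-y)]
  set s : ℝ := x + y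
  set p : ℝ := x * y
  clear_value s p
  clear hP hx hy hx1 hx2 hy1 hy2
  have h8 : s^3 ≤ 8 := by nlinarith
  have h3 : Real.sqrt 3 ^ 2 = 3 := Real.sq_sqrt (by norm_num)
  have h3nn := Real.sqrt_nonneg 3
  have hub : Real.sqrt 3 < 1.8 := by nlinarith
  rcases ht with ht | ht
  · -- t ≤ b₁
    obtain ⟨D, hD3, hD1, hD2, hb1⟩ := Dfacts
    rw [hb1] at ht
    have h1t : 2 + 2*t < 0 := by linarith
    rw [abs_of_neg h1t, abs_le]
    have hkst : (0:ℝ) ≤ (3-t)*s := mul_nonneg (by linarith) hs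
    constructor
    · nlinarith [mul_nonneg hkst (by linarith : (0:ℝ) ≤ s^2 - 4*p),
        mul_nonneg (by linarith : (0:ℝ) ≤ -(t+1)) (by linarith : (0:ℝ) ≤ 8 - s^3)]
    · have hkey := keyIneq D s hD3 hD1 hD2 hs hs2
      have hq2 : (0:ℝ) < s^2 - s + 2 := by nlinarith [sq_nonneg (2*s-1)]
      have h1 : s^3 + 8 ≤ (3-t)*(s^2-s+2) := by
        nlinarith [mul_nonneg (by linarith : (0:ℝ) ≤ (3-t) - (12+6*D)/7) hq2.le]
      nlinarith [h1, mul_nonneg hkst (by linarith : (0:ℝ) ≤ p - (s-1))]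
  · -- 3 - 2√3 ≤ t
    have h1t : 0 ≤ 2 + 2*t := by nlinarith
    rw [abs_of_nonneg h1t, abs_le]
    constructor
    · rcases le_or_gt 3 t with hc | hc
      · nlinarith [mul_nonneg (mul_nonneg (by linarith : (0:ℝ) ≤ t-3) hs)
          (by linarith : (0:ℝ) ≤ p - (s-1)),
          mul_nonneg (by linarith : (0:ℝ) ≤ t-3) (by linarith : (0:ℝ) ≤ 2-s),
          mul_nonneg (by linarith : (0:ℝ) ≤ t-3) (sq_nonneg s)]
      · nlinarith [mul_nonneg (mul_nonneg (by linarith : (0:ℝ) ≤ 3-t) hs)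
          (by linarith : (0:ℝ) ≤ s^2 - 4*p),
          mul_nonneg (by nlinarith : (0:ℝ) ≤ t+1) (by nlinarith : (0:ℝ) ≤ s^3 + 8)]
    · rcases le_or_gt 3 t with hc | hc
      · nlinarith [mul_nonneg (mul_nonneg (by linarith : (0:ℝ) ≤ t-3) hs)
          (by linarith : (0:ℝ) ≤ s^2 - 4*p),
          mul_nonneg (by linarith : (0:ℝ) ≤ t+1) (by linarith : (0:ℝ) ≤ 8 - s^3)]
      · have hq : (0:ℝ) ≤ s^2 + (t-1)*s + (t+1) := by
          have hfac : (0:ℝ) ≤ (t - (3 - 2*Real.sqrt 3)) * ((3 + 2*Real.sqrt 3) - t) := by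
            apply mul_nonneg (by linarith) (by nlinarith)
          nlinarith [sq_nonneg (2*s + t - 1), hfac]
        nlinarith [mul_nonneg (by linarith : (0:ℝ) ≤ 2 - s) hq,
          mul_nonneg (mul_nonneg (by linarith : (0:ℝ) ≤ 3-t) hs)
            (by linarith : (0:ℝ) ≤ p - (s-1))]

lemma core' (t x y : ℝ) (ht : t ≤ b₁ ∨ 3 - 2*Real.sqrt 3 ≤ t)
    (hx : |x| ≤ 1) (hy : |y| ≤ 1) :
    |x^3 + t*x^2*y + t*x*y^2 + y^3| ≤ |2 + 2*t| := by
  rcases le_total 0 (x + y) with h | h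
  · exact core t x y ht hx hy h
  · have := core t (-x) (-y) ht (by rwa [abs_neg]) (by rwa [abs_neg]) (by linarith)
    have h2 : (-x)^3 + t*(-x)^2*(-y) + t*(-x)*(-y)^2 + (-y)^3
        = -(x^3 + t*x^2*y + t*x*y^2 + y^3) := by ring
    rwa [h2, abs_neg] at this

lemma bound (a b x y : ℝ) (ha : a ≠ 0)
    (h : b / a ∉ Set.Ioo b₁ (3 - 2 * Real.sqrt 3))
    (hx : |x| ≤ 1) (hy : |y| ≤ 1) :
    |a * x^3 + b * x^2 * y + b * x * y^2 + a * y^3| ≤ |2*a + 2*b| := by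
  set t : ℝ := b / a with htdef
  have hb : b = t * a := by rw [htdef, div_mul_cancel₀ b ha]
  have ht : t ≤ b₁ ∨ 3 - 2*Real.sqrt 3 ≤ t := by
    rcases le_or_gt t b₁ with h' | h'
    · exact Or.inl h'
    · refine Or.inr ?_
      by_contra hc
      exact h ⟨h', by linarith⟩
  have e1 : a * x^3 + b * x^2 * y + b * x * y^2 + a * y^3
      = a * (x^3 + t*x^2*y + t*x*y^2 + y^3) := by rw [hb]; ring
  have e2 : 2*a + 2*b = a * (2 + 2*t) := by rw [hb]; ring
  rw [e1, e2, abs_mul, abs_mul]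
  exact mul_le_mul_of_nonneg_left (core' t x y ht hx hy) (abs_nonneg a)

theorem stmt11 (a b : ℝ) (ha : a ≠ 0) (h : b / a ∉ Set.Ioo b₁ (3 - 2 * Real.sqrt 3)) :
    supCubic a b = |2*a + 2*b| := by
  have hg : IsGreatest {r : ℝ | ∃ x y : ℝ, |x| ≤ 1 ∧ |y| ≤ 1 ∧
      r = |a * x^3 + b * x^2 * y + b * x * y^2 + a * y^3|} (|2*a + 2*b|) := by
    constructor
    · exact ⟨1, 1, by norm_num, by norm_num,
        by rw [show a*1^3 + b*1^2*1 + b*1*1^2 + a*1^3 = 2*a + 2*b by ring]⟩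
    · rintro r ⟨x, y, hx, hy, rfl⟩
      exact bound a b x y ha h hx hy
  exact hg.csSup_eq
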